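/- arXiv:2105.05383 — 5 statements merged into one kernel-verified Lean document; each statement's English description precedes it below -/
import Mathlib

section
/- Let k ≤ n be positive integers and let A ∈ ℤ^{k×n} be a primitive matrix. Then A can be extended to an n×n unimodular matrix over ℤ; that is, there exists a unimodular matrix U ∈ ℤ^{n×n} whose first k rows are the rows of A. -/
def IsPrimitive {k n : ℕ} (A : Matrix (Fin k) (Fin n) ℤ) : Prop :=
  ∀ y : Fin k → ℚ,
    (∀ j : Fin n, ∃ z : ℤ, Matrix.vecMul y (A.map (fun a => (a : ℚ))) j = (z : ℚ)) →
    ∀ i : Fin k, ∃ z : ℤ, y i = (z : ℚ)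

theorem stmt_5 (k n : ℕ) (hk : 0 < k) (hkn : k ≤ n)
    (A : Matrix (Fin k) (Fin n) ℤ) (hA : IsPrimitive A) :
    ∃ U : Matrix (Fin n) (Fin n) ℤ, (U.det = 1 ∨ U.det = -1) ∧
      ∀ (i : Fin k) (j : Fin n), U (Fin.castLE hkn i) j = A i j := by
  classical
  have hcast : ∀ (y : Fin k → ℚ) (j : Fin n),
      Matrix.vecMul y (A.map (fun a => (a : ℚ))) j = ∑ i, y i * (A i j : ℚ) := by
    intro y j
    simp [Matrix.vecMul, dotProduct, Matrix.map_apply]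
  have hcastInt : ∀ (y : Fin k → ℤ) (j : Fin n),
      ((Matrix.vecMul y A j : ℤ) : ℚ) = ∑ i, (y i : ℚ) * (A i j : ℚ) := by
    intro y j
    simp [Matrix.vecMul, dotProduct]
  -- injectivity of `y ↦ y ᵥ* A` on integer vectors
  have hinj0 : ∀ y : Fin k → ℤ, Matrix.vecMul y A = 0 → y = 0 := by
    intro y hy
    by_contra hy0
    obtain ⟨i₀, hi₀⟩ : ∃ i₀, y i₀ ≠ 0 := by
      by_contra h; push_neg at h; exact hy0 (funext h)
    set c : ℚ := 2 * (y i₀ : ℚ) with hc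
    have hc0 : c ≠ 0 := by
      simp [hc]
      exact_mod_cast hi₀
    have hint : ∀ j : Fin n, ∃ z : ℤ,
        Matrix.vecMul (fun i => (y i : ℚ) / c) (A.map (fun a => (a : ℚ))) j = (z : ℚ) := by
      intro j
      refine ⟨0, ?_⟩
      rw [hcast]
      have : ∑ i, (y i : ℚ) / c * (A i j : ℚ) = (1 / c) * ∑ i, (y i : ℚ) * (A i j : ℚ) := by
        rw [Finset.mul_sum]; apply Finset.sum_congr rfl; intro i _; ring
      rw [this, ← hcastInt]
      have : Matrix.vecMul y A j = 0 := by rw [hy]; rfl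
      rw [this]; simp
    obtain ⟨z, hz⟩ := hA (fun i => (y i : ℚ) / c) hint i₀
    have : (y i₀ : ℚ) / c = 1 / 2 := by
      rw [hc]
      field_simp
    rw [this] at hz
    have : (2 : ℚ) * z = 1 := by rw [← hz]; norm_num
    have : (2 : ℤ) * z = 1 := by exact_mod_cast this
    omega
  -- saturation
  set N : Submodule ℤ (Fin n → ℤ) := LinearMap.range A.vecMulLinear with hN
  have hmemN : ∀ x, x ∈ N ↔ ∃ y : Fin k → ℤ, Matrix.vecMul y A = x := by
    intro x
    simp [hN, LinearMap.mem_range]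
  have hsat : ∀ (m : ℤ) (x : Fin n → ℤ), m ≠ 0 → m • x ∈ N → x ∈ N := by
    intro m x hm hmx
    obtain ⟨y, hy⟩ := (hmemN _).1 hmx
    have hint : ∀ j : Fin n, ∃ z : ℤ,
        Matrix.vecMul (fun i => (y i : ℚ) / m) (A.map (fun a => (a : ℚ))) j = (z : ℚ) := by
      intro j
      refine ⟨x j, ?_⟩
      rw [hcast]
      have h1 : ∑ i, (y i : ℚ) / m * (A i j : ℚ) = (1 / m) * ∑ i, (y i : ℚ) * (A i j : ℚ) := by
        rw [Finset.mul_sum]; apply Finset.sum_congr rfl; intro i _; ring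
      have h2 : Matrix.vecMul y A j = m * x j := by rw [hy]; simp
      rw [h1, ← hcastInt, h2]
      have hm' : (m : ℚ) ≠ 0 := by exact_mod_cast hm
      push_cast
      field_simp
    have := hA (fun i => (y i : ℚ) / m) hint
    choose z hz using this
    refine (hmemN _).2 ⟨z, ?_⟩
    funext j
    have : ((Matrix.vecMul z A j : ℤ) : ℚ) = ((x j : ℤ) : ℚ) := by
      rw [hcastInt]
      have h1 : ∑ i, (z i : ℚ) * (A i j : ℚ) = ∑ i, (y i : ℚ) / m * (A i j : ℚ) := by
        apply Finset.sum_congr rfl; intro i _; rw [← hz i]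
      have h2 : ∑ i, (y i : ℚ) / m * (A i j : ℚ) = (1 / m) * ∑ i, (y i : ℚ) * (A i j : ℚ) := by
        rw [Finset.mul_sum]; apply Finset.sum_congr rfl; intro i _; ring
      have h3 : Matrix.vecMul y A j = m * x j := by rw [hy]; simp
      have hm' : (m : ℚ) ≠ 0 := by exact_mod_cast hm
      rw [h1, h2, ← hcastInt, h3]
      push_cast
      field_simp
    exact_mod_cast this
  -- quotient is torsion free, finite, hence free
  haveI : NoZeroSMulDivisors ℤ ((Fin n → ℤ) ⧸ N) := by
    constructor
    intro m q h
    by_cases hm : m = 0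
    · exact Or.inl hm
    · right
      obtain ⟨x, rfl⟩ := N.mkQ_surjective q
      have : N.mkQ (m • x) = 0 := by rw [map_smul]; exact h
      have hmx : m • x ∈ N := by rwa [← Submodule.Quotient.mk_eq_zero]
      have : x ∈ N := hsat m x hm hmx
      rwa [Submodule.mkQ_apply, Submodule.Quotient.mk_eq_zero]
  haveI : Module.Free ℤ ((Fin n → ℤ) ⧸ N) := Module.free_of_finite_type_torsion_free'
  set ι := Module.Free.ChooseBasisIndex ℤ ((Fin n → ℤ) ⧸ N) with hι
  set bQ : Module.Basis ι ℤ ((Fin n → ℤ) ⧸ N) := Module.Free.chooseBasis ℤ _ with hbQ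
  -- section of the quotient map
  obtain ⟨s, hs⟩ := Module.projective_lifting_property N.mkQ LinearMap.id N.mkQ_surjective
  have hsec : ∀ q, N.mkQ (s q) = q := fun q => congrFun (congrArg DFunLike.coe hs) q
  -- the candidate basis vectors
  set v : (Fin k ⊕ ι) → (Fin n → ℤ) := Sum.elim (fun i => A i) (fun j => s (bQ j)) with hv
  have hrowN : ∀ i : Fin k, A i ∈ N := by
    intro i
    refine (hmemN _).2 ⟨Pi.single i 1, ?_⟩
    funext j
    simp [Matrix.vecMul, dotProduct, Pi.single_apply, Finset.sum_ite_eq']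
  have hsum : ∀ g : Fin k → ℤ, ∑ i, g i • A i = Matrix.vecMul g A := by
    intro g
    funext j
    simp [Matrix.vecMul, dotProduct, Finset.sum_apply]
  have hli : LinearIndependent ℤ v := by
    rw [Fintype.linearIndependent_iff]
    intro g hg
    have hq : N.mkQ (∑ x, g x • v x) = 0 := by rw [hg]; simp
    rw [map_sum] at hq
    simp only [map_smul] at hq
    rw [Fintype.sum_sum_type] at hq
    have h1 : ∀ i : Fin k, N.mkQ (v (Sum.inl i)) = 0 := by
      intro i
      simp only [hv, Sum.elim_inl]
      rw [Submodule.mkQ_apply, Submodule.Quotient.mk_eq_zero]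
      exact hrowN i
    have h2 : ∀ j : ι, N.mkQ (v (Sum.inr j)) = bQ j := by
      intro j
      simp only [hv, Sum.elim_inr]
      exact hsec _
    simp only [h1, h2, smul_zero, Finset.sum_const_zero, zero_add] at hq
    have hginr : ∀ j : ι, g (Sum.inr j) = 0 := by
      have := Fintype.linearIndependent_iff.1 bQ.linearIndependent (fun j => g (Sum.inr j)) hq
      exact this
    have hq2 : ∑ i, g (Sum.inl i) • v (Sum.inl i) = 0 := by
      have := hg
      rw [Fintype.sum_sum_type] at this
      simp only [hginr, zero_smul, Finset.sum_const_zero, add_zero] at this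
      exact this
    have : Matrix.vecMul (fun i => g (Sum.inl i)) A = 0 := by
      rw [← hsum]
      simpa [hv] using hq2
    have hginl := hinj0 _ this
    intro x
    cases x with
    | inl i => exact congrFun hginl i
    | inr j => exact hginr j
  have hspan : ⊤ ≤ Submodule.span ℤ (Set.range v) := by
    intro x _
    have hx1 : x - s (N.mkQ x) ∈ N := by
      rw [← Submodule.Quotient.mk_eq_zero, ← Submodule.mkQ_apply, map_sub, hsec]
      simp
    have hNle : N ≤ Submodule.span ℤ (Set.range v) := by
      intro w hw
      obtain ⟨y, hy⟩ := (hmemN _).1 hw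
      rw [← hy, ← hsum]
      apply Submodule.sum_mem
      intro i _
      exact Submodule.smul_mem _ _ (Submodule.subset_span ⟨Sum.inl i, rfl⟩)
    have hx2 : s (N.mkQ x) ∈ Submodule.span ℤ (Set.range v) := by
      have hrepr := bQ.sum_repr (N.mkQ x)
      have : s (N.mkQ x) = ∑ j, (bQ.repr (N.mkQ x)) j • s (bQ j) := by
        conv_lhs => rw [← hrepr]
        rw [map_sum]
        simp [map_smul]
      rw [this]
      apply Submodule.sum_mem
      intro j _
      exact Submodule.smul_mem _ _ (Submodule.subset_span ⟨Sum.inr j, rfl⟩)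
    have : x = (x - s (N.mkQ x)) + s (N.mkQ x) := by ring
    rw [this]
    exact Submodule.add_mem _ (hNle hx1) hx2
  set b₀ : Module.Basis (Fin k ⊕ ι) ℤ (Fin n → ℤ) := Module.Basis.mk hli hspan with hb₀
  -- cardinality
  have hcard : k + Fintype.card ι = n := by
    have h1 := Module.finrank_eq_card_basis b₀
    have h2 : Module.finrank ℤ (Fin n → ℤ) = n := Module.finrank_fin_fun ℤ
    rw [h2] at h1
    simpa [Fintype.card_sum] using h1.symm
  set eι : ι ≃ Fin (n - k) := Fintype.equivFinOfCardEq (by omega) with heι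
  set e : (Fin k ⊕ ι) ≃ Fin n :=
    (Equiv.sumCongr (Equiv.refl (Fin k)) eι).trans
      (finSumFinEquiv.trans (finCongr (by omega))) with he
  set b : Module.Basis (Fin n) ℤ (Fin n → ℤ) := b₀.reindex e with hb
  refine ⟨Matrix.of (fun i j => b i j), ?_, ?_⟩
  · have hPQ := (Pi.basisFun ℤ (Fin n)).toMatrix_mul_toMatrix_flip b
    have hdet : ((Pi.basisFun ℤ (Fin n)).toMatrix b).det * (b.toMatrix (Pi.basisFun ℤ (Fin n))).det = 1 := by
      rw [← Matrix.det_mul, hPQ, Matrix.det_one]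
    have hunit : IsUnit ((Pi.basisFun ℤ (Fin n)).toMatrix b).det := IsUnit.of_mul_eq_one _ hdet
    have hEq : (Matrix.of (fun i j => b i j)) = ((Pi.basisFun ℤ (Fin n)).toMatrix b).transpose := by
      ext i j
      simp [Module.Basis.toMatrix_apply, Matrix.transpose_apply]
    rw [hEq, Matrix.det_transpose]
    exact Int.isUnit_iff.mp hunit
  · intro i j
    have he1 : e (Sum.inl i) = Fin.castLE hkn i := by
      apply Fin.ext
      simp [he, finSumFinEquiv]
    have : b (Fin.castLE hkn i) = A i := by
      rw [hb, Module.Basis.reindex_apply, ← he1, Equiv.symm_apply_apply, hb₀, Module.Basis.coe_mk]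
      rfl
    simp [this]
end

section
/- Let p be a prime, λ ≥ 2 an integer, n ≥ 1 an integer, and let V be a linear subspace of (ℤ/pℤ)^n of dimension d ≤ n. Let a ∈ ℤ^n be a random vector with entries chosen independently and uniformly from Λ = {0,1,…,λ−1}. Then the probability that the reduction of a modulo p lies in V is at most (⌈λ/p⌉/λ)^{n−d}. -/
lemma exists_coords (K : Type*) [Field K] (n d : ℕ) (hn : 1 ≤ n)
    (V : Submodule K (Fin n → K)) (hd : Module.finrank K V = d) :
    ∃ S : Finset (Fin n), S.card ≤ d ∧
      ∀ v ∈ V, (∀ i ∈ S, v i = 0) → v = 0 := by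
  classical
  set f : Fin n → Module.Dual K V :=
    fun i => (LinearMap.proj i).comp V.subtype with hf
  have hspan : Submodule.span K (Set.range f) = ⊤ := by
    have hsurj : Function.Surjective V.subtype.dualMap :=
      LinearMap.dualMap_surjective_of_injective V.injective_subtype
    have hrange : Set.range f = V.subtype.dualMap '' (Set.range (fun i : Fin n => (LinearMap.proj i : (Fin n → K) →ₗ[K] K))) := by
      rw [← Set.range_comp]
      rfl
    have hcoordspan : Submodule.span K (Set.range (fun i : Fin n => (LinearMap.proj i : (Fin n → K) →ₗ[K] K))) = ⊤ := by
      have hcoord : (fun i : Fin n => (LinearMap.proj i : (Fin n → K) →ₗ[K] K))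
          = ⇑(Pi.basisFun K (Fin n)).dualBasis := by
        rw [Module.Basis.coe_dualBasis]
        funext i
        ext x
        simp [Module.Basis.coord_apply, Pi.basisFun_repr]
      rw [hcoord]
      exact (Pi.basisFun K (Fin n)).dualBasis.span_eq
    rw [hrange, ← Submodule.map_span, hcoordspan, Submodule.map_top,
      LinearMap.range_eq_top.mpr hsurj]
  obtain ⟨t, hts, htspan, htli⟩ := exists_linearIndependent K (Set.range f)
  rw [hspan] at htspan
  have htfin : t.Finite := htli.setFinite
  have hcard : htfin.toFinset.card ≤ d := by
    rw [← hd]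
    have : Module.finrank K (Module.Dual K V) = Module.finrank K V :=
      Subspace.dual_finrank_eq
    rw [← this]
    have h2 : LinearIndependent K
        (fun x : ((htfin.toFinset : Finset (Module.Dual K V)) : Set (Module.Dual K V)) =>
          (x : Module.Dual K V)) := by
      rw [Set.Finite.coe_toFinset]
      exact htli
    exact LinearIndependent.finset_card_le_finrank h2
  have hchoice : ∀ φ ∈ t, ∃ i : Fin n, f i = φ := fun φ hφ => hts hφ
  set g : Module.Dual K V → Fin n := fun φ =>
    if h : ∃ i, f i = φ then h.choose else ⟨0, hn⟩ with hg
  refine ⟨htfin.toFinset.image g, le_trans (Finset.card_image_le) hcard, ?_⟩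
  intro v hv hvz
  have key : ∀ φ : Module.Dual K V, φ ⟨v, hv⟩ = 0 := by
    intro φ
    have hφ : φ ∈ Submodule.span K t := by rw [htspan]; trivial
    induction hφ using Submodule.span_induction with
    | mem ψ hψ =>
        have hex : ∃ i, f i = ψ := hts hψ
        have : f (g ψ) = ψ := by
          rw [hg]; simp only [dif_pos hex]; exact hex.choose_spec
        rw [← this]
        have hgmem : g ψ ∈ htfin.toFinset.image g :=
          Finset.mem_image_of_mem g (htfin.mem_toFinset.mpr hψ)
        simpa [hf] using hvz _ hgmem
    | zero => simp
    | add x y _ _ hx hy => simp [hx, hy]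
    | smul c x _ hx => simp [hx]
  have := (Module.forall_dual_apply_eq_zero_iff K (⟨v, hv⟩ : V)).mp key
  simpa [Subtype.ext_iff] using this

lemma residue_count (p lam : ℕ) (hp : 0 < p) (a : ZMod p) [NeZero p] :
    (Finset.univ.filter (fun x : Fin lam => ((x : ℕ) : ZMod p) = a)).card
      ≤ (lam + p - 1) / p := by
  classical
  set c := (lam + p - 1) / p with hc
  have hlampc : lam ≤ p * c := by
    have h1 : lam + p - 1 < p * (c + 1) := Nat.lt_mul_div_succ _ hp
    have h2 : p * (c + 1) = p * c + p := by ring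
    omega
  rw [← Finset.card_range c]
  refine Finset.card_le_card_of_injOn (fun x => (x : ℕ) / p) ?_ ?_
  · intro x hx
    simp only [Finset.mem_coe, Finset.mem_filter, Finset.mem_univ, true_and] at hx
    simp only [Finset.mem_coe, Finset.mem_range]
    have hxlt : (x : ℕ) < lam := x.2
    exact Nat.div_lt_of_lt_mul (by omega)
  · intro x hx y hy hxy
    simp only [Finset.coe_filter, Set.mem_setOf_eq, Finset.mem_univ, true_and] at hx hy
    have hxm : (x : ℕ) % p = a.val := by
      rw [← ZMod.val_natCast, hx]
    have hym : (y : ℕ) % p = a.val := by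
      rw [← ZMod.val_natCast, hy]
    have : (x : ℕ) = (y : ℕ) := by
      have ex := Nat.div_add_mod (x : ℕ) p
      have ey := Nat.div_add_mod (y : ℕ) p
      simp only at hxy
      have hmul : p * ((x : ℕ) / p) = p * ((y : ℕ) / p) := by rw [hxy]
      omega
    exact Fin.ext this

lemma ceil_eq (p lam : ℕ) (hp : 0 < p) (hlam : 0 < lam) :
    (⌈(lam : ℝ) / (p : ℝ)⌉ : ℝ) = ((lam + p - 1) / p : ℕ) := by
  set c := (lam + p - 1) / p with hc
  have hpc1 : p * c ≤ lam + p - 1 := Nat.mul_div_le _ _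
  have hlampc : lam ≤ p * c := by
    have h1 : lam + p - 1 < p * (c + 1) := Nat.lt_mul_div_succ _ hp
    have h2 : p * (c + 1) = p * c + p := by ring
    omega
  have hpr : (0 : ℝ) < p := by exact_mod_cast hp
  have : ⌈(lam : ℝ) / (p : ℝ)⌉ = (c : ℤ) := by
    rw [Int.ceil_eq_iff]
    constructor
    · rw [lt_div_iff₀ hpr]
      have : p * c < lam + p := by omega
      have := (Nat.cast_lt (α := ℝ)).mpr this
      push_cast at this ⊢
      nlinarith
    · rw [div_le_iff₀ hpr]
      have := (Nat.cast_le (α := ℝ)).mpr hlampc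
      push_cast at this ⊢
      linarith
  rw [this]
  push_cast
  ring

open Classical in
theorem stmt_8 (p lam n d : ℕ) (hp : p.Prime) (hlam : 2 ≤ lam) (hn : 1 ≤ n)
    (V : Submodule (ZMod p) (Fin n → ZMod p))
    (hd : Module.finrank (ZMod p) V = d) (hdn : d ≤ n) :
    ((Finset.univ.filter (fun ω : Fin n → Fin lam =>
        (fun j => ((ω j : ℕ) : ZMod p)) ∈ V)).card : ℝ)
      / (Fintype.card (Fin n → Fin lam) : ℝ)
    ≤ ((⌈(lam : ℝ) / (p : ℝ)⌉ : ℝ) / (lam : ℝ)) ^ (n - d) := by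
  classical
  have hp2 := hp.two_le
  haveI : Fact p.Prime := ⟨hp⟩
  haveI : NeZero p := ⟨hp.ne_zero⟩
  set c := (lam + p - 1) / p with hc
  obtain ⟨S, hScard, hSkey⟩ := exists_coords (ZMod p) n d hn V hd
  set s := S.card with hs
  have hsn : s ≤ n := by
    simpa using Finset.card_le_univ S
  set A := Finset.univ.filter (fun ω : Fin n → Fin lam =>
        (fun j => ((ω j : ℕ) : ZMod p)) ∈ V) with hA
  have hcardcompl : (Finset.univ.filter (fun i : Fin n => i ∉ S)).card = n - s := by
    have h2 : Finset.univ.filter (fun i : Fin n => i ∉ S) = Sᶜ := by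
      ext i; simp
    rw [h2, Finset.card_compl, Fintype.card_fin]
  have hmain : A.card ≤ c ^ (n - s) * lam ^ s := by
    have himage : (A.image (fun ω (i : S) => ω i)).card ≤ lam ^ s := by
      calc (A.image (fun ω (i : S) => ω i)).card
          ≤ Fintype.card (S → Fin lam) := Finset.card_le_univ _
        _ = lam ^ s := by simp [Fintype.card_fun, Fintype.card_coe, hs]
    have hfiber : ∀ b ∈ A.image (fun ω (i : S) => ω i),
        (A.filter (fun ω => (fun (i : S) => ω i) = b)).card ≤ c ^ (n - s) := by
      intro b hb
      obtain ⟨ω₀, hω₀A, hω₀⟩ := Finset.mem_image.mp hb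
      have hvV : (fun j => ((ω₀ j : ℕ) : ZMod p)) ∈ V := (Finset.mem_filter.mp hω₀A).2
      set v : Fin n → ZMod p := fun j => ((ω₀ j : ℕ) : ZMod p) with hv
      set T : ∀ _ : Fin n, Finset (Fin lam) := fun i =>
        if i ∈ S then {ω₀ i}
        else Finset.univ.filter (fun x : Fin lam => ((x : ℕ) : ZMod p) = v i) with hT
      have hsub : A.filter (fun ω => (fun (i : S) => ω i) = b) ⊆ Fintype.piFinset T := by
        intro ω hω
        obtain ⟨hωA, hωb⟩ := Finset.mem_filter.mp hω
        have hωV : (fun j => ((ω j : ℕ) : ZMod p)) ∈ V := (Finset.mem_filter.mp hωA).2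
        have heqS : ∀ i ∈ S, ω i = ω₀ i := by
          intro i hi
          exact congrFun (hωb.trans hω₀.symm) ⟨i, hi⟩
        have hred : ∀ j, ((ω j : ℕ) : ZMod p) = v j := by
          have hdiff := hSkey ((fun j => ((ω j : ℕ) : ZMod p)) - v)
            (Submodule.sub_mem V hωV hvV) ?_
          · intro j
            have := congrFun hdiff j
            simpa [sub_eq_zero, Pi.sub_apply] using this
          · intro i hi
            simp [Pi.sub_apply, hv, heqS i hi]
        rw [Fintype.mem_piFinset]
        intro i
        by_cases h : i ∈ S
        · simp [hT, h, heqS i h]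
        · simp [hT, h, hred i]
      calc (A.filter (fun ω => (fun (i : S) => ω i) = b)).card
          ≤ (Fintype.piFinset T).card := Finset.card_le_card hsub
        _ = ∏ i, (T i).card := Fintype.card_piFinset T
        _ ≤ ∏ i, (if i ∈ S then 1 else c) := by
            apply Finset.prod_le_prod'
            intro i _
            by_cases h : i ∈ S
            · simp [hT, h]
            · simp only [hT, if_neg h]
              exact residue_count p lam hp.pos (v i)
        _ = c ^ (n - s) := by
            rw [Finset.prod_ite, Finset.prod_const, Finset.prod_const, one_pow, one_mul,
              hcardcompl]
    calc A.card ≤ c ^ (n - s) * (A.image (fun ω (i : S) => ω i)).card :=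
          Finset.card_le_mul_card_image A _ hfiber
      _ ≤ c ^ (n - s) * lam ^ s := Nat.mul_le_mul_left _ himage
  -- pass to reals
  have hlam0 : (0 : ℝ) < lam := by positivity
  have hc1 : 1 ≤ c := by
    rw [hc]
    rw [Nat.le_div_iff_mul_le hp.pos]
    omega
  have hclam : c ≤ lam := by
    have hle : lam + p - 1 ≤ lam * p := by
      obtain ⟨a, rfl⟩ := Nat.exists_eq_add_of_le hlam
      obtain ⟨b, rfl⟩ := Nat.exists_eq_add_of_le hp2
      have hexp : (2 + a) * (2 + b) = 4 + 2 * a + 2 * b + a * b := by ring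
      omega
    calc c ≤ lam * p / p := Nat.div_le_div_right hle
      _ = lam := Nat.mul_div_cancel _ hp.pos
  rw [ceil_eq p lam hp.pos (by omega), ← hc]
  have hcardfun : (Fintype.card (Fin n → Fin lam) : ℝ) = (lam : ℝ) ^ n := by
    simp [Fintype.card_fun]
  rw [hcardfun]
  have hpow : ((c : ℝ) / lam) ^ (n - s) = ((c : ℝ) ^ (n - s) * (lam : ℝ) ^ s) / (lam : ℝ) ^ n := by
    have hn' : (lam : ℝ) ^ n = lam ^ (n - s) * lam ^ s := by
      rw [← pow_add]
      congr 1
      omega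
    rw [div_pow, hn', mul_div_mul_right _ _ (by positivity : (lam : ℝ) ^ s ≠ 0)]
  have step1 : (A.card : ℝ) / (lam : ℝ) ^ n ≤ ((c : ℝ) / lam) ^ (n - s) := by
    rw [hpow]
    apply div_le_div_of_nonneg_right ?_ (by positivity)
    · exact_mod_cast hmain
  refine le_trans step1 ?_
  apply pow_le_pow_of_le_one (by positivity) ?_ (by omega)
  rw [div_le_one hlam0]
  exact_mod_cast hclam
end

section
/- Let λ ≥ 2 be an integer and p a prime with p ≥ λ. Let n and i be integers with 1 ≤ i ≤ n, and let B ∈ ℤ^{(i−1)×n} be a matrix whose reduction modulo p has rank i−1 over ℤ/pℤ. Let a ∈ ℤ^n be a random row vector with entries chosen independently and uniformly from Λ = {0,1,…,λ−1}, and let B' ∈ ℤ^{i×n} be B with the row a appended. Then the probability that the reduction of B' modulo p has rank at most i−1 over ℤ/pℤ is at most (1/λ)^{n−i+1}. -/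
open Matrix

open Classical in
theorem stmt_9 (lam p n i : ℕ) (hlam : 2 ≤ lam) (hp : p.Prime) (hplam : lam ≤ p)
    (hi : 1 ≤ i) (hin : i ≤ n)
    (B : Matrix (Fin (i - 1)) (Fin n) ℤ)
    (hB : (B.map (fun z : ℤ => (z : ZMod p))).rank = i - 1) :
    ((Finset.univ.filter (fun ω : Fin n → Fin lam =>
        ((Matrix.of (Fin.snoc (fun r => B r) (fun j => ((ω j : ℕ) : ℤ)))).map
          (fun z : ℤ => (z : ZMod p))).rank ≤ i - 1)).card : ℝ)
      / (Fintype.card (Fin n → Fin lam) : ℝ)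
    ≤ (1 / (lam : ℝ)) ^ (n - i + 1) := by
  have hexp : i - 1 + (n - i + 1) = n := by omega
  haveI : Fact p.Prime := ⟨hp⟩
  set F := ZMod p
  set A : Matrix (Fin (i - 1)) (Fin n) F := B.map (fun z : ℤ => (z : F)) with hA
  -- columns of A span everything
  have hcol : Submodule.span F (Set.range Aᵀ) = ⊤ := by
    apply Submodule.eq_top_of_finrank_eq
    rw [← (show Set.range A.col = Set.range Aᵀ from rfl), ← Matrix.rank_eq_finrank_span_cols, hB, Module.finrank_fin_fun]
  -- extract a basis from the columns
  obtain ⟨b, hbsub, hbspan, hbli⟩ := exists_linearIndependent F (Set.range Aᵀ)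
  rw [hcol] at hbspan
  have hbfin : b.Finite := (Set.finite_range Aᵀ).subset hbsub
  haveI : Fintype b := hbfin.fintype
  let bas : Module.Basis b F (Fin (i - 1) → F) :=
    Module.Basis.mk hbli (by rw [Subtype.range_coe]; exact hbspan.ge)
  have hcardb : Fintype.card b = i - 1 := by
    have := Module.finrank_eq_card_basis bas
    rw [Module.finrank_fin_fun] at this
    omega
  -- choose an index for each basis column
  have hchoice : ∀ v : b, ∃ j : Fin n, Aᵀ j = (v : Fin (i - 1) → F) := fun v => hbsub v.2
  choose g hg using hchoice
  -- every ω in the filter gives a row in the row span of A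
  have key : ∀ ω : Fin n → Fin lam,
      ((Matrix.of (Fin.snoc (fun r => B r) (fun j => ((ω j : ℕ) : ℤ)))).map
          (fun z : ℤ => (z : F))).rank ≤ i - 1 →
      ∃ x : Fin (i - 1) → F, (fun j => ((ω j : ℕ) : F)) = x ᵥ* A := by
    intro ω hω
    set C : Matrix (Fin (i - 1 + 1)) (Fin n) F :=
      (Matrix.of (Fin.snoc (fun r => B r) (fun j => ((ω j : ℕ) : ℤ)))).map
        (fun z : ℤ => (z : F)) with hC
    have hrowsub : Submodule.span F (Set.range A) ≤ Submodule.span F (Set.range C) := by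
      apply Submodule.span_le.2
      rintro _ ⟨r, rfl⟩
      apply Submodule.subset_span
      refine ⟨Fin.castSucc r, ?_⟩
      ext j
      simp [hC, hA, Fin.snoc_castSucc]
    have hrkA : Module.finrank F (Submodule.span F (Set.range A)) = i - 1 := by
      have h2 := Matrix.rank_eq_finrank_span_cols Aᵀ
      rw [Matrix.rank_transpose, Matrix.col_transpose, hB] at h2
      exact h2.symm
    have hrkC : Module.finrank F (Submodule.span F (Set.range C)) ≤ i - 1 := by
      have h2 := Matrix.rank_eq_finrank_span_cols Cᵀ
      rw [Matrix.rank_transpose, Matrix.col_transpose] at h2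
      exact h2.symm.trans_le hω
    have heq : Submodule.span F (Set.range A) = Submodule.span F (Set.range C) :=
      Submodule.eq_of_le_of_finrank_le hrowsub (by rw [hrkA]; exact hrkC)
    have hmem : (fun j => ((ω j : ℕ) : F)) ∈ Submodule.span F (Set.range C) := by
      apply Submodule.subset_span
      refine ⟨Fin.last _, ?_⟩
      ext j
      simp [hC, Fin.snoc_last]
    rw [← heq, show Set.range A = Set.range A.row from rfl, ← range_vecMulLinear] at hmem
    obtain ⟨x, hx⟩ := hmem
    exact ⟨x, by rw [← hx, Matrix.vecMulLinear_apply]⟩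
  -- counting: the filtered set injects into (b → Fin lam)
  have hcount : (Finset.univ.filter (fun ω : Fin n → Fin lam =>
      ((Matrix.of (Fin.snoc (fun r => B r) (fun j => ((ω j : ℕ) : ℤ)))).map
        (fun z : ℤ => (z : F))).rank ≤ i - 1)).card ≤ lam ^ (i - 1) := by
    have hinj : ∀ ω ∈ (Finset.univ.filter (fun ω : Fin n → Fin lam =>
        ((Matrix.of (Fin.snoc (fun r => B r) (fun j => ((ω j : ℕ) : ℤ)))).map
          (fun z : ℤ => (z : F))).rank ≤ i - 1)), ∀ ω' ∈ (Finset.univ.filter (fun ω : Fin n → Fin lam =>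
        ((Matrix.of (Fin.snoc (fun r => B r) (fun j => ((ω j : ℕ) : ℤ)))).map
          (fun z : ℤ => (z : F))).rank ≤ i - 1)),
        (fun v : b => ω (g v)) = (fun v : b => ω' (g v)) → ω = ω' := by
      intro ω hω ω' hω' hagree
      rw [Finset.mem_filter] at hω hω'
      obtain ⟨x, hx⟩ := key ω hω.2
      obtain ⟨x', hx'⟩ := key ω' hω'.2
      -- the reduced rows agree
      have hxx : x = x' := by
        have hdot : ∀ v : b, (x - x') ⬝ᵥ (v : Fin (i - 1) → F) = 0 := by
          intro v
          have h1 : ((ω (g v) : ℕ) : F) = ((ω' (g v) : ℕ) : F) := by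
            rw [congrFun hagree v]
          have h2 : (x ᵥ* A) (g v) = (x' ᵥ* A) (g v) := by
            rw [← congrFun hx (g v), ← congrFun hx' (g v)]; exact h1
          have h3 : x ⬝ᵥ Aᵀ (g v) = x' ⬝ᵥ Aᵀ (g v) := by
            exact h2
          rw [hg v] at h3
          rw [sub_dotProduct, h3, sub_self]
        -- functional vanishing on a spanning set vanishes everywhere
        have hall : ∀ w : Fin (i - 1) → F, (x - x') ⬝ᵥ w = 0 := by
          intro w
          have hw : w ∈ Submodule.span F b := hbspan ▸ Submodule.mem_top
          induction hw using Submodule.span_induction with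
          | mem y hy => exact hdot ⟨y, hy⟩
          | zero => simp
          | add y z _ _ hy hz => rw [dotProduct_add, hy, hz, add_zero]
          | smul c y _ hy => rw [dotProduct_smul, hy, smul_zero]
        have : ∀ k, (x - x') k = 0 := by
          intro k
          have := hall (Pi.single k 1)
          simpa [dotProduct_single] using this
        funext k
        have := this k
        simpa [sub_eq_zero] using this
      have hrows : (fun j => ((ω j : ℕ) : F)) = fun j => ((ω' j : ℕ) : F) := by
        rw [hx, hx', hxx]
      funext j
      have h4 : ((ω j : ℕ) : F) = ((ω' j : ℕ) : F) := congrFun hrows j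
      have h5 : (ω j : ℕ) = (ω' j : ℕ) := by
        have := congrArg ZMod.val h4
        rwa [ZMod.val_natCast_of_lt (lt_of_lt_of_le (ω j).2 hplam),
          ZMod.val_natCast_of_lt (lt_of_lt_of_le (ω' j).2 hplam)] at this
      exact Fin.ext h5
    calc (Finset.univ.filter (fun ω : Fin n → Fin lam =>
      ((Matrix.of (Fin.snoc (fun r => B r) (fun j => ((ω j : ℕ) : ℤ)))).map
        (fun z : ℤ => (z : F))).rank ≤ i - 1)).card
        ≤ (Finset.univ : Finset (b → Fin lam)).card := by
          apply Finset.card_le_card_of_injOn (fun ω => fun v : b => ω (g v))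
          · intro a _; exact Finset.mem_univ _
          · intro a ha a' ha' h; exact hinj a ha a' ha' h
      _ = lam ^ (i - 1) := by
          simp [Finset.card_univ, Fintype.card_fun, hcardb]
  -- final arithmetic
  have hcard : (Fintype.card (Fin n → Fin lam) : ℝ) = (lam : ℝ) ^ n := by
    simp [Fintype.card_fun]
  rw [hcard]
  have hlampos : (0:ℝ) < (lam : ℝ) := by positivity
  rw [div_le_iff₀ (by positivity), one_div, inv_pow]
  rw [inv_mul_eq_div, le_div_iff₀ (by positivity)]
  have h1 : ((Finset.univ.filter (fun ω : Fin n → Fin lam =>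
      ((Matrix.of (Fin.snoc (fun r => B r) (fun j => ((ω j : ℕ) : ℤ)))).map
        (fun z : ℤ => (z : F))).rank ≤ i - 1)).card : ℝ) ≤ (lam:ℝ) ^ (i-1) := by
    exact_mod_cast hcount
  have h2 : (lam:ℝ) ^ (i-1) * (lam:ℝ) ^ (n - i + 1) = (lam:ℝ) ^ n := by
    rw [← pow_add, hexp]
  have h3 := mul_le_mul_of_nonneg_right h1 (le_of_lt (by positivity : (0:ℝ) < (lam:ℝ) ^ (n - i + 1)))
  rw [h2] at h3
  exact h3
end

section
/- Let i ≤ n be positive integers, let λ ≥ 1 be an integer, and let A ∈ ℤ^{i×n} with all entries of absolute value at most λ and with rank i over ℚ. Then for every prime p with p > (i·λ)^i, the reduction of A modulo p has rank i over ℤ/pℤ. -/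
open Matrix Module Submodule

/-- If a wide matrix over a field has full row rank, some column selection is invertible. -/
lemma aux_exists_submatrix {K : Type*} [Field K] {i n : ℕ}
    (A : Matrix (Fin i) (Fin n) K) (h : A.rank = i) :
    ∃ f : Fin i → Fin n, IsUnit (A.submatrix id f) := by
  have hspan : span K (Set.range Aᵀ) = ⊤ := by
    apply Submodule.eq_top_of_finrank_eq
    rw [show Set.range Aᵀ = Set.range A.col from rfl, ← Matrix.rank_eq_finrank_span_cols, h]
    simp [Module.finrank_pi]
  obtain ⟨b, hbsub, hbspan, hbli⟩ := exists_linearIndependent K (Set.range Aᵀ)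
  rw [hspan] at hbspan
  have basis : Basis b K (Fin i → K) :=
    Module.Basis.mk hbli (by rw [Subtype.range_coe, hbspan])
  haveI : Fintype b := FiniteDimensional.fintypeBasisIndex basis
  have hcard : Fintype.card b = i := by
    have := Module.finrank_eq_card_basis basis
    rw [Module.finrank_pi, Fintype.card_fin] at this
    omega
  let e : Fin i ≃ b := (Fintype.equivFinOfCardEq hcard).symm
  have hchoice : ∀ k : Fin i, ∃ j : Fin n, Aᵀ j = (e k : Fin i → K) :=
    fun k => hbsub (e k).2
  choose f hf using hchoice
  refine ⟨f, ?_⟩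
  rw [← Matrix.linearIndependent_cols_iff_isUnit]
  have : (fun k => (A.submatrix id f)ᵀ k) = (fun x : b => (x : Fin i → K)) ∘ e := by
    funext k
    simp only [Function.comp_apply, ← hf k]
    ext r
    simp [Matrix.transpose_apply]
  rw [show (A.submatrix id f).col = fun k => (A.submatrix id f)ᵀ k from rfl, this]
  exact hbli.comp e e.injective

theorem stmt_10 (i n lam : ℕ) (hi : 0 < i) (hin : i ≤ n) (hlam : 1 ≤ lam)
    (A : Matrix (Fin i) (Fin n) ℤ)
    (hbnd : ∀ r j, |A r j| ≤ (lam : ℤ))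
    (hrank : (A.map (fun z : ℤ => (z : ℚ))).rank = i) :
    ∀ p : ℕ, p.Prime → (i * lam) ^ i < p →
      (A.map (fun z : ℤ => (z : ZMod p))).rank = i := by
  intro p hp hplt
  -- get the column selection from the rational rank hypothesis
  obtain ⟨f, hf⟩ := aux_exists_submatrix (A.map (fun z : ℤ => (z : ℚ))) hrank
  set B : Matrix (Fin i) (Fin i) ℤ := A.submatrix id f with hB
  -- determinant over ℚ is nonzero, hence over ℤ
  have hmapQ : (A.map (fun z : ℤ => (z : ℚ))).submatrix id f
      = B.map (fun z : ℤ => (z : ℚ)) := by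
    ext r k; simp [hB]
  have hdetQ : ((B.det : ℤ) : ℚ) ≠ 0 := by
    have hu : IsUnit (B.map (fun z : ℤ => (z : ℚ))).det := by
      rw [← hmapQ]; exact hf.map (Matrix.detMonoidHom)
    have : (B.map (fun z : ℤ => (z : ℚ))).det = ((B.det : ℤ) : ℚ) :=
      (RingHom.map_det (Int.castRingHom ℚ) B).symm
    rw [this] at hu
    exact hu.ne_zero
  have hdet0 : B.det ≠ 0 := by exact_mod_cast hdetQ
  -- bound on determinant
  have hdetle : |B.det| ≤ ((i * lam : ℕ) : ℤ) ^ i := by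
    have h1 : |B.det| ≤ (Nat.factorial i) • ((lam : ℤ)) ^ i := by
      have := Matrix.det_le (A := B) (abv := AbsoluteValue.abs)
        (x := (lam : ℤ)) (fun r k => hbnd _ _)
      simpa [Fintype.card_fin] using this
    have h2 : (Nat.factorial i : ℤ) * (lam : ℤ) ^ i ≤ ((i : ℤ) * lam) ^ i := by
      rw [mul_pow]
      apply mul_le_mul_of_nonneg_right _ (by positivity)
      exact_mod_cast Nat.factorial_le_pow i
    calc |B.det| ≤ (Nat.factorial i : ℤ) * (lam : ℤ) ^ i := by
          simpa [nsmul_eq_mul] using h1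
      _ ≤ ((i : ℤ) * lam) ^ i := h2
      _ = ((i * lam : ℕ) : ℤ) ^ i := by push_cast; ring
  -- determinant is nonzero mod p
  have hdetp : ((B.det : ℤ) : ZMod p) ≠ 0 := by
    rw [Ne, ZMod.intCast_zmod_eq_zero_iff_dvd]
    intro hdvd
    have hle : (p : ℤ) ≤ |B.det| := Int.le_of_dvd (abs_pos.mpr hdet0)
      ((dvd_abs _ _).mpr hdvd)
    have hlt : ((i * lam : ℕ) : ℤ) ^ i < (p : ℤ) := by exact_mod_cast hplt
    omega
  haveI : Fact p.Prime := ⟨hp⟩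
  set M : Matrix (Fin i) (Fin n) (ZMod p) := A.map (fun z : ℤ => (z : ZMod p)) with hM
  have hsub : M.submatrix id f = B.map (fun z : ℤ => (z : ZMod p)) := by
    ext r k; simp [hM, hB]
  have hdet' : (M.submatrix id f).det ≠ 0 := by
    rw [hsub]
    have : (B.map (fun z : ℤ => (z : ZMod p))).det = ((B.det : ℤ) : ZMod p) :=
      (RingHom.map_det (Int.castRingHom (ZMod p)) B).symm
    rw [this]
    exact hdetp
  have hu : IsUnit (M.submatrix id f) :=
    (Matrix.isUnit_iff_isUnit_det _).mpr (isUnit_iff_ne_zero.mpr hdet')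
  have hranksub : (M.submatrix id f).rank = i := by
    rw [Matrix.rank_of_isUnit _ hu, Fintype.card_fin]
  have hle1 : (M.submatrix id f).rank ≤ M.rank := by
    have h := Matrix.mul_submatrix_one (Equiv.refl (Fin n)) f M
    have h2 : M.submatrix id f = M * (1 : Matrix (Fin n) (Fin n) (ZMod p)).submatrix (Equiv.refl (Fin n)) f := by
      rw [h]; rfl
    rw [h2]
    exact Matrix.rank_mul_le_left _ _
  have hle2 : M.rank ≤ i := by
    simpa [Fintype.card_fin] using M.rank_le_card_height
  omega
end

section
/- Let n ≥ 2 be an integer and let A ∈ ℤ^{n×n} be a nonsingular integer matrix. Then there exists a matrix B ∈ ℤ^{n×n} that agrees with A in its first n−1 columns, satisfies ‖B‖ ≤ n²·‖A‖, and such that the standard basis row vector e_n = (0,…,0,1) lies in the lattice generated by the rows of B, i.e., there exists x ∈ ℤ^n with x·B = e_n (equivalently, the last diagonal entry of the Hermite normal form of B equals 1). -/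
/-- The maximum of the absolute values of the entries of an integer matrix. -/
def matNorm {a b : ℕ} (M : Matrix (Fin a) (Fin b) ℤ) : ℕ :=
  Finset.univ.sup fun p : Fin a × Fin b => (M p.1 p.2).natAbs

/-- Bézout over a finite set in ℤ. -/
lemma bezout_finset {ι : Type*} [DecidableEq ι] (s : Finset ι) (f : ι → ℤ) :
    ∃ c : ι → ℤ, ∑ i ∈ s, c i * f i = s.gcd f := by
  induction s using Finset.induction_on with
  | empty => exact ⟨0, by simp⟩
  | insert a s ha ih =>
    obtain ⟨c, hc⟩ := ih
    refine ⟨fun i => if i = a then Int.gcdA (f a) (s.gcd f)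
      else Int.gcdB (f a) (s.gcd f) * c i, ?_⟩
    have hb := Int.gcd_eq_gcd_ab (f a) (s.gcd f)
    have hg : GCDMonoid.gcd (f a) (s.gcd f) = (Int.gcd (f a) (s.gcd f) : ℤ) :=
      (Int.coe_gcd _ _).symm
    have hsum : ∑ i ∈ s,
        (if i = a then (f a).gcdA (s.gcd f) else (f a).gcdB (s.gcd f) * c i) * f i
        = (f a).gcdB (s.gcd f) * s.gcd f := by
      have he : ∀ i ∈ s,
          (if i = a then (f a).gcdA (s.gcd f) else (f a).gcdB (s.gcd f) * c i) * f i
          = (f a).gcdB (s.gcd f) * (c i * f i) := by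
        intro i hi
        rw [if_neg (by rintro rfl; exact ha hi)]
        ring
      rw [Finset.sum_congr rfl he, ← Finset.mul_sum, hc]
    rw [Finset.sum_insert ha, Finset.gcd_insert, hg, hb]
    rw [hsum]
    simp only [eq_self_iff_true, if_true]
    ring

theorem stmt_16 (n : ℕ) (hn : 2 ≤ n)
    (A : Matrix (Fin n) (Fin n) ℤ) (hA : A.det ≠ 0) :
    ∃ B : Matrix (Fin n) (Fin n) ℤ,
      (∀ (i : Fin n) (j : Fin n), (j : ℕ) < n - 1 → B i j = A i j) ∧
      matNorm B ≤ n ^ 2 * matNorm A ∧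
      ∃ x : Fin n → ℤ,
        Matrix.vecMul x B = fun j : Fin n => if (j : ℕ) = n - 1 then 1 else 0 := by
  classical
  set r : Fin n := ⟨n - 1, by omega⟩ with hr
  -- the cofactor row
  set y : Fin n → ℤ := fun i => A.adjugate r i with hy
  have hyA : ∀ j, ∑ i, y i * A i j = A.det * (if r = j then 1 else 0) := by
    intro j
    have := congrArg (fun M => M r j) (Matrix.adjugate_mul A)
    simpa [Matrix.mul_apply, Matrix.one_apply, hy] using this
  set d : ℤ := Finset.univ.gcd y with hd
  have hd0 : d ≠ 0 := by
    intro h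
    have hall := Finset.gcd_eq_zero_iff.1 (hd ▸ h)
    have := hyA r
    rw [if_pos rfl, mul_one] at this
    apply hA
    rw [← this]
    apply Finset.sum_eq_zero
    intro i _
    rw [hall i (Finset.mem_univ i), zero_mul]
  have hdvd : ∀ i, d ∣ y i := fun i => Finset.gcd_dvd (Finset.mem_univ i)
  set x : Fin n → ℤ := fun i => y i / d with hx
  have hyx : ∀ i, y i = d * x i := fun i => (Int.mul_ediv_cancel' (hdvd i)).symm
  -- x is orthogonal to all columns except r
  have hxj : ∀ j, j ≠ r → ∑ i, x i * A i j = 0 := by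
    intro j hj
    have h1 : d * ∑ i, x i * A i j = 0 := by
      rw [Finset.mul_sum]
      have : ∀ i ∈ Finset.univ, d * (x i * A i j) = y i * A i j := by
        intro i _; rw [hyx i]; ring
      rw [Finset.sum_congr rfl this, hyA j, if_neg (fun h => hj h.symm), mul_zero]
    exact (mul_eq_zero.1 h1).resolve_left hd0
  -- D := x·(column r) is a nonzero integer (shown later via z)
  set D : ℤ := ∑ i, x i * A i r with hD
  -- gcd of x is 1
  have hdnn : 0 ≤ d := by
    have := Finset.normalize_gcd (s := (Finset.univ : Finset (Fin n))) (f := y)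
    rw [← hd] at this
    rw [← this, ← Int.abs_eq_normalize]
    exact abs_nonneg d
  have hgcdx : Finset.univ.gcd x = 1 := by
    have h1 : Finset.univ.gcd y = normalize d * Finset.univ.gcd x := by
      have : y = fun i => d * x i := funext hyx
      rw [hd] at *
      conv_lhs => rw [this]
      exact Finset.gcd_mul_left
    rw [← hd, ← Int.abs_eq_normalize, abs_of_nonneg hdnn] at h1
    have := h1.symm
    nth_rewrite 2 [show d = d * 1 by ring] at this
    exact mul_left_cancel₀ hd0 this
  -- Bézout: b0 with x·b0 = 1
  obtain ⟨c, hc⟩ := bezout_finset Finset.univ x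
  rw [hgcdx] at hc
  set b0 : Fin n → ℤ := c with hb0def
  have hb0 : ∑ i, x i * b0 i = 1 := by
    rw [← hc]; apply Finset.sum_congr rfl; intros; ring
  -- rational side
  set Aq : Matrix (Fin n) (Fin n) ℚ := A.map ((↑) : ℤ → ℚ) with hAq
  have hAqd : IsUnit Aq.det := by
    have hdet : Aq.det = ((A.det : ℤ) : ℚ) := by
      rw [hAq]
      exact (RingHom.map_det (Int.castRingHom ℚ) A).symm
    rw [hdet, isUnit_iff_ne_zero]
    exact_mod_cast hA
  set z : Fin n → ℚ := Aq⁻¹.mulVec (fun i => (b0 i : ℚ)) with hz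
  have hzb0 : ∀ i, (b0 i : ℚ) = ∑ j, Aq i j * z j := by
    have h1 : Aq.mulVec z = fun i => (b0 i : ℚ) := by
      rw [hz, Matrix.mulVec_mulVec, Matrix.mul_nonsing_inv _ hAqd, Matrix.one_mulVec]
    intro i
    have := congrFun h1 i
    rw [Matrix.mulVec, dotProduct] at this
    exact this.symm
  -- key identity: z r * D = 1
  have hkey : z r * (D : ℚ) = 1 := by
    have h1 : (1 : ℚ) = ∑ i, (x i : ℚ) * (b0 i : ℚ) := by
      exact_mod_cast congrArg (fun t : ℤ => (t : ℚ)) hb0.symm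
    have h2 : (1 : ℚ) = ∑ j, (∑ i, (x i : ℚ) * Aq i j) * z j := by
      rw [h1]
      calc ∑ i, (x i : ℚ) * (b0 i : ℚ)
          = ∑ i, ∑ j, (x i : ℚ) * Aq i j * z j := by
            apply Finset.sum_congr rfl
            intro i _
            rw [hzb0 i, Finset.mul_sum]
            apply Finset.sum_congr rfl
            intros; ring
        _ = ∑ j, ∑ i, (x i : ℚ) * Aq i j * z j := Finset.sum_comm
        _ = ∑ j, (∑ i, (x i : ℚ) * Aq i j) * z j := by
            apply Finset.sum_congr rfl
            intro j _
            rw [Finset.sum_mul]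
    have h3 : ∀ j, (∑ i, (x i : ℚ) * Aq i j) = ((∑ i, x i * A i j : ℤ) : ℚ) := by
      intro j
      push_cast [hAq, Matrix.map_apply]
      rfl
    rw [h2, Fintype.sum_eq_single r]
    · rw [h3 r, ← hD]; ring
    · intro j hj
      rw [h3 j, hxj j hj]
      simp
  have hD0 : D ≠ 0 := by
    intro h
    rw [h] at hkey
    simp at hkey
  have hzr : |z r| ≤ 1 := by
    have hDabs : (1 : ℚ) ≤ |(D : ℚ)| := by
      rw [← Int.cast_abs]
      exact_mod_cast Int.one_le_abs hD0
    have := congrArg abs hkey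
    rw [abs_mul, abs_one] at this
    nlinarith [abs_nonneg (z r), abs_nonneg ((D : ℚ))]
  -- the new column
  set b : Fin n → ℤ := fun i => b0 i - ∑ j ∈ Finset.univ.erase r, ⌊z j⌋ * A i j with hb
  set B : Matrix (Fin n) (Fin n) ℤ := A.updateCol r b with hB
  have hBapply : ∀ i j, B i j = if j = r then b i else A i j := by
    intro i j; rw [hB, Matrix.updateCol_apply]
  have hjr : ∀ j : Fin n, (j : ℕ) = n - 1 ↔ j = r := by
    intro j
    constructor
    · intro h; exact Fin.ext h
    · intro h; rw [h]
  -- norm bound for b over ℚ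
  have hm : ∀ i j, |(A i j : ℚ)| ≤ (matNorm A : ℚ) := by
    intro i j
    have h1 : (A i j).natAbs ≤ matNorm A :=
      Finset.le_sup (f := fun p : Fin n × Fin n => (A p.1 p.2).natAbs)
        (Finset.mem_univ (i, j))
    rw [← Int.cast_abs, Int.abs_eq_natAbs]
    exact_mod_cast h1
  have hbbound : ∀ i, |(b i : ℚ)| ≤ (n : ℚ) * (matNorm A : ℚ) := by
    intro i
    have hsplit : (b i : ℚ) =
        (∑ j ∈ Finset.univ.erase r, (z j - (⌊z j⌋ : ℚ)) * Aq i j) + z r * Aq i r := by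
      have e0 : (b i : ℚ) = (∑ j, Aq i j * z j)
          - ∑ j ∈ Finset.univ.erase r, (⌊z j⌋ : ℚ) * Aq i j := by
        simp only [hb]
        push_cast
        rw [hzb0 i]
        simp only [hAq, Matrix.map_apply]
      rw [e0, ← Finset.sum_erase_add _ _ (Finset.mem_univ r),
        add_sub_right_comm, ← Finset.sum_sub_distrib]
      congr 1
      · apply Finset.sum_congr rfl
        intros; ring
      · ring
    rw [hsplit]
    have h1 : |∑ j ∈ Finset.univ.erase r, (z j - (⌊z j⌋ : ℚ)) * Aq i j|
        ≤ ∑ j ∈ Finset.univ.erase r, |(z j - (⌊z j⌋ : ℚ)) * Aq i j| :=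
      Finset.abs_sum_le_sum_abs _ _
    have h2 : ∀ j ∈ Finset.univ.erase r, |(z j - (⌊z j⌋ : ℚ)) * Aq i j|
        ≤ (matNorm A : ℚ) := by
      intro j _
      rw [abs_mul]
      have hf1 : |z j - (⌊z j⌋ : ℚ)| ≤ 1 := by
        rw [Int.self_sub_floor, Int.abs_fract]
        exact (Int.fract_lt_one _).le
      have hf2 : |Aq i j| ≤ (matNorm A : ℚ) := by
        rw [hAq, Matrix.map_apply]; exact hm i j
      calc |z j - (⌊z j⌋ : ℚ)| * |Aq i j| ≤ 1 * (matNorm A : ℚ) := by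
            apply mul_le_mul hf1 hf2 (abs_nonneg _) zero_le_one
        _ = (matNorm A : ℚ) := one_mul _
    have h3 : |z r * Aq i r| ≤ (matNorm A : ℚ) := by
      rw [abs_mul]
      calc |z r| * |Aq i r| ≤ 1 * (matNorm A : ℚ) := by
            apply mul_le_mul hzr ?_ (abs_nonneg _) zero_le_one
            rw [hAq, Matrix.map_apply]; exact hm i r
        _ = (matNorm A : ℚ) := one_mul _
    have h4 : ((Finset.univ.erase r).card : ℚ) = (n : ℚ) - 1 := by
      rw [Finset.card_erase_of_mem (Finset.mem_univ r), Finset.card_univ,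
        Fintype.card_fin]
      have : (1:ℕ) ≤ n := by omega
      push_cast [Nat.cast_sub this]
      ring
    calc |(∑ j ∈ Finset.univ.erase r, (z j - (⌊z j⌋ : ℚ)) * Aq i j) + z r * Aq i r|
        ≤ |∑ j ∈ Finset.univ.erase r, (z j - (⌊z j⌋ : ℚ)) * Aq i j| + |z r * Aq i r| :=
          abs_add_le _ _
      _ ≤ (∑ j ∈ Finset.univ.erase r, |(z j - (⌊z j⌋ : ℚ)) * Aq i j|) + (matNorm A : ℚ) :=
          add_le_add h1 h3
      _ ≤ (∑ j ∈ Finset.univ.erase r, (matNorm A : ℚ)) + (matNorm A : ℚ) := by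
          refine add_le_add ?_ le_rfl
          exact Finset.sum_le_sum h2
      _ = ((n : ℚ) - 1) * (matNorm A : ℚ) + (matNorm A : ℚ) := by
          rw [Finset.sum_const, nsmul_eq_mul, h4]
      _ = (n : ℚ) * (matNorm A : ℚ) := by ring
  refine ⟨B, ?_, ?_, x, ?_⟩
  · intro i j hj
    rw [hBapply, if_neg]
    intro h
    rw [h, hr] at hj
    simp at hj
  · -- norm bound
    apply Finset.sup_le
    intro p _
    rw [hBapply]
    by_cases hp : p.2 = r
    · rw [if_pos hp]
      have h1 : ((b p.1).natAbs : ℚ) ≤ (n : ℚ) * (matNorm A : ℚ) := by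
        rw [Nat.cast_natAbs, Int.cast_abs]
        exact hbbound p.1
      have h2 : (b p.1).natAbs ≤ n * matNorm A := by exact_mod_cast h1
      calc (b p.1).natAbs ≤ n * matNorm A := h2
        _ ≤ n ^ 2 * matNorm A := by
            apply Nat.mul_le_mul_right
            nlinarith
    · rw [if_neg hp]
      have h1 : (A p.1 p.2).natAbs ≤ matNorm A :=
        Finset.le_sup (f := fun q : Fin n × Fin n => (A q.1 q.2).natAbs)
          (Finset.mem_univ p)
      calc (A p.1 p.2).natAbs ≤ matNorm A := h1
        _ ≤ n ^ 2 * matNorm A := by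
            apply Nat.le_mul_of_pos_left
            nlinarith
  · -- vecMul
    funext j
    rw [Matrix.vecMul, dotProduct]
    by_cases hj : j = r
    · rw [hj, if_pos (by rw [hr])]
      have : ∀ i ∈ Finset.univ, x i * B i r = x i * b i := by
        intro i _; rw [hBapply, if_pos rfl]
      rw [Finset.sum_congr rfl this]
      have hexp : ∑ i, x i * b i
          = (∑ i, x i * b0 i)
            - ∑ j' ∈ Finset.univ.erase r, ⌊z j'⌋ * ∑ i, x i * A i j' := by
        simp only [hb]
        calc ∑ i, x i * (b0 i - ∑ j' ∈ Finset.univ.erase r, ⌊z j'⌋ * A i j')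
            = ∑ i, (x i * b0 i
                - ∑ j' ∈ Finset.univ.erase r, x i * (⌊z j'⌋ * A i j')) := by
              apply Finset.sum_congr rfl
              intro i _
              rw [mul_sub, Finset.mul_sum]
          _ = (∑ i, x i * b0 i)
                - ∑ i, ∑ j' ∈ Finset.univ.erase r, x i * (⌊z j'⌋ * A i j') :=
              Finset.sum_sub_distrib _ _
          _ = (∑ i, x i * b0 i)
                - ∑ j' ∈ Finset.univ.erase r, ∑ i, x i * (⌊z j'⌋ * A i j') := by
              rw [Finset.sum_comm]
          _ = (∑ i, x i * b0 i)
                - ∑ j' ∈ Finset.univ.erase r, ⌊z j'⌋ * ∑ i, x i * A i j' := by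
              congr 1
              apply Finset.sum_congr rfl
              intro j' _
              rw [Finset.mul_sum]
              apply Finset.sum_congr rfl
              intros; ring
      rw [hexp, hb0]
      have hz0 : ∑ j' ∈ Finset.univ.erase r, ⌊z j'⌋ * ∑ i, x i * A i j' = 0 := by
        apply Finset.sum_eq_zero
        intro j' hj'
        rw [hxj j' (Finset.ne_of_mem_erase hj'), mul_zero]
      rw [hz0, sub_zero]
    · rw [if_neg (fun h => hj ((hjr j).1 h))]
      have : ∀ i ∈ Finset.univ, x i * B i j = x i * A i j := by
        intro i _; rw [hBapply, if_neg hj]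
      rw [Finset.sum_congr rfl this]
      exact hxj j hj
end
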